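/- arXiv:0907.2892 — 7 statements merged into one kernel-verified Lean document; each statement's English description precedes it below -/
import Mathlib

section
/- Let Γ be a profinite group, let G and A be finite groups, let α : G → A and μ : Γ → A be surjective (continuous) homomorphisms, let I be a set, let G^I_A = {(g_i) ∈ G^I : α(g_i) = α(g_j) for all i, j ∈ I} be the fiber power with projections π_i : G^I_A → G, and let α_I : G^I_A → A be defined by α_I = α ∘ π_i (which is independent of the choice of i). If θ : Γ → G^I_A is a continuous surjective homomorphism with α_I ∘ θ = μ, then for every i ∈ I the homomorphism θ_i := π_i ∘ θ : Γ → G is surjective and satisfies α ∘ θ_i = μ, and for every finite subset I₀ ⊆ I the index formula [ker(μ) : ∩_{i∈I₀} ker(θ_i)] = ∏_{i∈I₀} [ker(μ) : ker(θ_i)] holds. -/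
/-!
Write `K i` for the kernel of the `i`-th coordinate `θ_i`. Every `K i` lies in `ker μ`, and the
fiber power is large enough that `ker μ ≤ (⋂_{j ∈ s} K j) ⊔ K i` whenever `i ∉ s`: for `x ∈ ker μ`,
the tuple that is `1` on `s` and `θ x` off `s` lies in the fiber power over `1`, so it is `θ u`
for some `u ∈ ⋂_{j ∈ s} K j`, and then `u⁻¹ x ∈ K i`. Since the `K i` are normal, the second
isomorphism theorem turns each such decomposition into one multiplicative step of the index
formula, and induction on `I₀` finishes.
-/

namespace Subgroup

variable {Γ : Type*} [Group Γ]

theorem relIndex_inf_eq_mul_of_le_sup {H K N : Subgroup Γ} [K.Normal]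
    (hH : H ≤ N) (hK : K ≤ N) (hN : N ≤ H ⊔ K) :
    (K ⊓ H).relIndex N = K.relIndex N * H.relIndex N := by
  have hsup : H ⊔ K = N := le_antisymm (sup_le hH hK) hN
  calc (K ⊓ H).relIndex N = (K ⊓ H).relIndex H * H.relIndex N :=
        (relIndex_mul_relIndex _ _ _ inf_le_right hH).symm
    _ = K.relIndex N * H.relIndex N := by
        rw [inf_relIndex_right, ← hsup, relIndex_sup_right]

theorem relIndex_biInf_eq_prod {ι : Type*} (K : ι → Subgroup Γ) (hnormal : ∀ i, (K i).Normal)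
    {N : Subgroup Γ} (hle : ∀ i, K i ≤ N)
    (hcover : ∀ (s : Finset ι) (i : ι), i ∉ s → N ≤ (⨅ j ∈ s, K j) ⊔ K i) (s : Finset ι) :
    (⨅ i ∈ s, K i).relIndex N = ∏ i ∈ s, (K i).relIndex N := by
  classical
  induction s using Finset.induction_on with
  | empty => simp
  | @insert i s hi ih =>
    rw [Finset.iInf_insert, Finset.prod_insert hi, ← ih]
    obtain rfl | ⟨j, hj⟩ := s.eq_empty_or_nonempty
    · simp
    · have := hnormal i
      exact relIndex_inf_eq_mul_of_le_sup ((iInf₂_le j hj).trans (hle j)) (hle i)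
        (hcover s i hi)

end Subgroup

section FiberPower

variable {Γ G A I : Type*} [Group Γ] [Group G] [Group A] {α : G →* A} {μ : Γ →* A}
  {θ : Γ →* (I → G)}

theorem ker_evalMonoidHom_comp_le_ker (hsol : ∀ (x : Γ) (i : I), α (θ x i) = μ x) (i : I) :
    ((Pi.evalMonoidHom (fun _ : I => G) i).comp θ).ker ≤ μ.ker := by
  intro x hx
  rw [MonoidHom.mem_ker, ← hsol x i, show θ x i = 1 from hx, map_one]

theorem ker_le_biInf_ker_evalMonoidHom_comp_sup
    (hsurj : ∀ g : I → G, (∀ i j : I, α (g i) = α (g j)) → ∃ x : Γ, θ x = g)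
    (hsol : ∀ (x : Γ) (i : I), α (θ x i) = μ x) {s : Finset I} {i : I} (hi : i ∉ s) :
    μ.ker ≤ (⨅ j ∈ s, ((Pi.evalMonoidHom (fun _ : I => G) j).comp θ).ker) ⊔
      ((Pi.evalMonoidHom (fun _ : I => G) i).comp θ).ker := by
  classical
  intro x hx
  have hαx : ∀ j, α (θ x j) = 1 := fun j => (hsol x j).trans hx
  obtain ⟨u, hu⟩ := hsurj (fun j => if j ∈ s then 1 else θ x j) fun j k => by
    split_ifs <;> simp [hαx]
  have hu_mem : u ∈ ⨅ j ∈ s, ((Pi.evalMonoidHom (fun _ : I => G) j).comp θ).ker :=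
    Subgroup.mem_iInf.2 fun j => Subgroup.mem_iInf.2 fun hj =>
      show θ u j = 1 by simp [hu, hj]
  have hux_mem : u⁻¹ * x ∈ ((Pi.evalMonoidHom (fun _ : I => G) i).comp θ).ker :=
    show θ (u⁻¹ * x) i = 1 by simp [hu, hi]
  simpa using Subgroup.mul_mem_sup hu_mem hux_mem

end FiberPower

theorem fiberPower_solution_independent_general
    {Γ : Type*} [Group Γ]
    {G A : Type*} [Group G] [Group A]
    (α : G →* A) (μ : Γ →* A)
    {I : Type*} (θ : Γ →* (I → G))
    (hsurj : ∀ g : I → G, (∀ i j : I, α (g i) = α (g j)) → ∃ x : Γ, θ x = g)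
    (hsol : ∀ (x : Γ) (i : I), α (θ x i) = μ x) :
    (∀ i : I,
      Function.Surjective ((Pi.evalMonoidHom (fun _ : I => G) i).comp θ) ∧
      α.comp ((Pi.evalMonoidHom (fun _ : I => G) i).comp θ) = μ) ∧
    (∀ I₀ : Finset I,
      (⨅ i ∈ I₀, ((Pi.evalMonoidHom (fun _ : I => G) i).comp θ).ker).relIndex μ.ker =
        ∏ i ∈ I₀, ((Pi.evalMonoidHom (fun _ : I => G) i).comp θ).ker.relIndex μ.ker) := by
  refine ⟨fun i => ⟨fun g => ?_, MonoidHom.ext fun x => hsol x i⟩, fun I₀ => ?_⟩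
  · obtain ⟨x, hx⟩ := hsurj (fun _ => g) fun _ _ => rfl
    exact ⟨x, congrFun hx i⟩
  · exact Subgroup.relIndex_biInf_eq_prod _ (fun _ => MonoidHom.normal_ker _)
      (ker_evalMonoidHom_comp_le_ker hsol)
      (fun _ _ hi => ker_le_biInf_ker_evalMonoidHom_comp_sup hsurj hsol hi) I₀

/-- if `θ : Γ → G^I_A` is a continuous surjective solution of the embedding
problem `(μ, α_I)` onto the fiber power `G^I_A = {(g_i) : α (g_i) = α (g_j)}` (here realized
as a homomorphism `θ : Γ →* (I → G)` landing in, and onto, the fiber power), then each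
`θ_i = π_i ∘ θ` is a solution of `(μ, α)`, and the family of kernels `ker θ_i` is
independent inside `ker μ`:
`[ker μ : ⋂_{i ∈ I₀} ker θ_i] = ∏_{i ∈ I₀} [ker μ : ker θ_i]` for every finite `I₀ ⊆ I`. -/
theorem fiberPower_solution_independent
    {Γ : Type*} [Group Γ] [TopologicalSpace Γ] [IsTopologicalGroup Γ]
    [CompactSpace Γ] [TotallyDisconnectedSpace Γ]
    {G A : Type*} [Group G] [Group A] [Finite G] [Finite A]
    [TopologicalSpace G] [DiscreteTopology G]
    (α : G →* A) (μ : Γ →* A)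
    (hα : Function.Surjective α) (hμ : Function.Surjective μ)
    {I : Type*} (θ : Γ →* (I → G)) (hcont : Continuous θ)
    (hmem : ∀ (x : Γ) (i j : I), α (θ x i) = α (θ x j))
    (hsurj : ∀ g : I → G, (∀ i j : I, α (g i) = α (g j)) → ∃ x : Γ, θ x = g)
    (hsol : ∀ (x : Γ) (i : I), α (θ x i) = μ x) :
    (∀ i : I,
      Function.Surjective ((Pi.evalMonoidHom (fun _ : I => G) i).comp θ) ∧
      α.comp ((Pi.evalMonoidHom (fun _ : I => G) i).comp θ) = μ) ∧
    (∀ I₀ : Finset I,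
      (⨅ i ∈ I₀, ((Pi.evalMonoidHom (fun _ : I => G) i).comp θ).ker).relIndex μ.ker =
        ∏ i ∈ I₀, ((Pi.evalMonoidHom (fun _ : I => G) i).comp θ).ker.relIndex μ.ker) :=
  fiberPower_solution_independent_general α μ θ hsurj hsol
end

section
/- Let Γ be a group, let A wr_{G0} G be a twisted wreath product of finite groups with projection α : A wr_{G0} G → G, let φ : Γ → G be a surjective homomorphism, and let θ : Γ → A wr_{G0} G be a homomorphism with α ∘ θ = φ. For each a ∈ A define f_a ∈ Ind_{G0}^G(A) by f_a(σ) = a^σ for σ ∈ G0 and f_a(σ) = 1 otherwise. If the subgroup {f_a : a ∈ A} is contained in the image θ(Γ), then θ is surjective. -/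
open MulOpposite

open scoped Classical

variable {G : Type*} [Group G] (G0 : Subgroup G) {A : Type*} [Group A]
  (act : G0ᵐᵒᵖ →* MulAut A)

/-- `Ind_{G0}^G(A)`: functions `f : G → A` with `f(σρ) = f(σ)^ρ` for `ρ ∈ G0`, where the
right action of `G0` on `A` is encoded by `act : G0ᵐᵒᵖ →* MulAut A`. -/
def TwInd : Subgroup (G → A) where
  carrier := {f | ∀ (σ : G) (ρ : G0), f (σ * ρ) = act (op ρ) (f σ)}
  one_mem' := by intro σ ρ; simp
  mul_mem' := by
    intro f g hf hg σ ρ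
    simp only [Pi.mul_apply, hf σ ρ, hg σ ρ, map_mul]
  inv_mem' := by
    intro f hf σ ρ
    simp only [Pi.inv_apply, hf σ ρ, map_inv]

/-- The left action of `G` on `Ind_{G0}^G(A)` given by `(σ • f)(τ) = f(σ⁻¹τ)`; the
twisted wreath product `A wr_{G0} G` is `TwInd G0 act ⋊[twAct G0 act] G`. -/
def twAct : G →* MulAut (TwInd G0 act) where
  toFun σ :=
    { toFun := fun f => ⟨fun τ => (f : G → A) (σ⁻¹ * τ), by
        intro τ ρ
        simpa [mul_assoc] using f.2 (σ⁻¹ * τ) ρ⟩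
      invFun := fun f => ⟨fun τ => (f : G → A) (σ * τ), by
        intro τ ρ
        simpa [mul_assoc] using f.2 (σ * τ) ρ⟩
      left_inv := by
        intro f; ext τ; simp [mul_assoc]
      right_inv := by
        intro f; ext τ; simp [mul_assoc]
      map_mul' := by
        intro f g; ext τ; rfl }
  map_one' := by ext f τ; simp
  map_mul' := by intro σ σ'; ext f τ; simp [mul_assoc]

/-- The distinguished copy of `A` inside `Ind_{G0}^G(A)`: for `a ∈ A`, `f_a(σ) = a^σ`
for `σ ∈ G0` and `f_a(σ) = 1` otherwise. -/
noncomputable def fA (a : A) : TwInd G0 act :=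
  ⟨fun σ => if h : σ ∈ G0 then act (op ⟨σ, h⟩) a else 1, by
    intro σ ρ
    dsimp only
    by_cases h : σ ∈ G0
    · have h2 : σ * ρ ∈ G0 := G0.mul_mem h ρ.2
      rw [dif_pos h2, dif_pos h]
      have : (⟨σ * ρ, h2⟩ : G0) = ⟨σ, h⟩ * ρ := rfl
      rw [this, op_mul, map_mul]
      rfl
    · have h2 : σ * ρ ∉ G0 := by
        intro hc
        exact h (by simpa using G0.mul_mem hc (G0.inv_mem ρ.2))
      rw [dif_neg h2, dif_neg h, map_one]⟩

/-!
Let `n ∈ Ind` be the `Ind`-component of an element of `θ(Γ)` lying over `σ`. Conjugating `f_b` by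
that element gives the translate `σ • f_a` with `a = n(σ) b n(σ)⁻¹`, so, as `φ` is onto, `θ(Γ)`
contains every translate `σ • f_a`. For finite `G` these translates generate `Ind`: multiplying
`f` by `(σ • f_{f(σ)})⁻¹` kills `f` on the coset `σ G0` and leaves it unchanged elsewhere. So
`θ(Γ)` contains the kernel `Ind` of `α` and maps onto `G`, hence is everything.
-/

open SemidirectProduct Subgroup

theorem SemidirectProduct.mul_inl_mul_inv {N H : Type*} [Group N] [Group H]
    {φ : H →* MulAut N} (g : N ⋊[φ] H) (n : N) :
    g * inl n * g⁻¹ = inl (g.left * φ g.right n * g.left⁻¹) := by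
  conv_lhs => rw [← inl_left_mul_inr_right g]
  rw [map_mul, map_mul, inl_aut, map_inv, map_inv]
  group

theorem Subgroup.eq_top_of_map_eq_top_of_ker_le {G' H : Type*} [Group G'] [Group H]
    {f : G' →* H} {K : Subgroup G'} (hK : K.map f = ⊤) (hker : f.ker ≤ K) : K = ⊤ := by
  rw [← sup_eq_left.2 hker, ← comap_map_eq, hK, comap_top]

@[simp]
theorem twAct_apply (σ : G) (f : TwInd G0 act) (τ : G) :
    (twAct G0 act σ f : G → A) τ = (f : G → A) (σ⁻¹ * τ) := rfl

theorem fA_apply_of_mem {σ : G} (h : σ ∈ G0) (a : A) :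
    (fA G0 act a : G → A) σ = act (op ⟨σ, h⟩) a := dif_pos h

theorem fA_apply_of_notMem {σ : G} (h : σ ∉ G0) (a : A) :
    (fA G0 act a : G → A) σ = 1 := dif_neg h

theorem TwInd.apply_eq_of_inv_mul_mem (f : TwInd G0 act) {σ τ : G} (h : σ⁻¹ * τ ∈ G0) :
    (f : G → A) τ = act (op ⟨σ⁻¹ * τ, h⟩) ((f : G → A) σ) := by
  simpa using f.2 σ ⟨σ⁻¹ * τ, h⟩

theorem twAct_fA_apply_self_of_inv_mul_mem (f : TwInd G0 act) {σ τ : G} (h : σ⁻¹ * τ ∈ G0) :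
    (twAct G0 act σ (fA G0 act ((f : G → A) σ)) : G → A) τ = (f : G → A) τ := by
  rw [twAct_apply, fA_apply_of_mem G0 act h, TwInd.apply_eq_of_inv_mul_mem G0 act f h]

theorem mul_twAct_fA_mul_inv (n : TwInd G0 act) (σ : G) (b : A) :
    n * twAct G0 act σ (fA G0 act b) * n⁻¹
      = twAct G0 act σ (fA G0 act ((n : G → A) σ * b * ((n : G → A) σ)⁻¹)) := by
  ext τ
  by_cases h : σ⁻¹ * τ ∈ G0
  · simp [fA_apply_of_mem G0 act h, TwInd.apply_eq_of_inv_mul_mem G0 act n h]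
  · simp [fA_apply_of_notMem G0 act h]

theorem closure_twAct_fA_eq_top [Finite G] :
    closure (Set.range fun p : G × A => twAct G0 act p.1 (fA G0 act p.2)) = ⊤ := by
  have := Fintype.ofFinite G
  set K := closure (Set.range fun p : G × A => twAct G0 act p.1 (fA G0 act p.2))
  suffices h : ∀ (s : Finset G) (f : TwInd G0 act), (∀ τ ∉ s, (f : G → A) τ = 1) → f ∈ K from
    eq_top_iff.2 fun f _ => h Finset.univ f (by simp)
  intro s
  induction s using Finset.induction_on with
  | empty =>
    intro f hf
    rw [show f = 1 from Subtype.ext (funext fun τ => hf τ (Finset.notMem_empty τ))]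
    exact K.one_mem
  | insert σ s _ ih =>
    intro f hf
    set g := twAct G0 act σ (fA G0 act ((f : G → A) σ))
    have hg : g ∈ K := subset_closure ⟨(σ, (f : G → A) σ), rfl⟩
    suffices hfg : f * g⁻¹ ∈ K by simpa using K.mul_mem hfg hg
    refine ih _ fun τ hτ => ?_
    by_cases h : σ⁻¹ * τ ∈ G0
    · simp [g, twAct_fA_apply_self_of_inv_mul_mem G0 act f h]
    · have hτσ : τ ≠ σ := by rintro rfl; simp at h
      simp [g, fA_apply_of_notMem G0 act h, hf τ (by simp [hτσ, hτ])]

theorem inl_twAct_fA_mem {H : Subgroup (TwInd G0 act ⋊[twAct G0 act] G)}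
    (hH : H.map rightHom = ⊤) (hA : ∀ a, inl (fA G0 act a) ∈ H) (σ : G) (a : A) :
    inl (twAct G0 act σ (fA G0 act a)) ∈ H := by
  obtain ⟨g, hg, rfl⟩ := mem_map.1 (hH ▸ mem_top σ)
  set n := (g.left : G → A) g.right
  have := H.mul_mem (H.mul_mem hg (hA (n⁻¹ * a * n))) (H.inv_mem hg)
  rwa [mul_inl_mul_inv, mul_twAct_fA_mul_inv, show n * (n⁻¹ * a * n) * n⁻¹ = a by group] at this

theorem eq_top_of_map_rightHom_eq_top_of_fA_mem [Finite G]
    {H : Subgroup (TwInd G0 act ⋊[twAct G0 act] G)}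
    (hH : H.map rightHom = ⊤) (hA : ∀ a, inl (fA G0 act a) ∈ H) : H = ⊤ := by
  have hcl : closure (Set.range fun p : G × A => twAct G0 act p.1 (fA G0 act p.2))
      ≤ H.comap inl :=
    closure_le _ |>.2 <| Set.range_subset_iff.2 fun p => inl_twAct_fA_mem G0 act hH hA p.1 p.2
  rw [closure_twAct_fA_eq_top] at hcl
  refine eq_top_of_map_eq_top_of_ker_le hH ?_
  rw [← range_inl_eq_ker_rightHom]
  rintro _ ⟨f, rfl⟩
  exact hcl (mem_top f)

theorem twistedWreath_weak_solution_surjective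
    {Γ : Type*} [Group Γ] [Finite G]
    (φ : Γ →* G) (hφ : Function.Surjective φ)
    (θ : Γ →* TwInd G0 act ⋊[twAct G0 act] G)
    (hθ : SemidirectProduct.rightHom.comp θ = φ)
    (hsub : ∀ a : A,
      (SemidirectProduct.inl (fA G0 act a) : TwInd G0 act ⋊[twAct G0 act] G) ∈ θ.range) :
    Function.Surjective θ := by
  have hmap : θ.range.map rightHom = ⊤ := by
    rw [MonoidHom.map_range, hθ, MonoidHom.range_eq_top.2 hφ]
  exact MonoidHom.range_eq_top.1 (eq_top_of_map_rightHom_eq_top_of_fA_mem G0 act hmap hsub)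
end

section
/- Let A wr_{G0} G be a twisted wreath product of finite groups with projection α : A wr_{G0} G → G, let π : Ind_{G0}^G(A) ⋊ G0 → A ⋊ G0 be the Shapiro map, let α0 : A ⋊ G0 → G0 be the canonical projection, and let i : G0 → A ⋊ G0 be a homomorphism with α0 ∘ i = id (a splitting of α0). Then there exists a homomorphism j : G → A wr_{G0} G with α ∘ j = id (a splitting of α) such that for every σ ∈ G0 one has j(σ) ∈ Ind_{G0}^G(A) ⋊ G0 and π(j(σ)) = i(σ). -/
open MulOpposite

open scoped Classical

variable {G : Type*} [Group G] (G0 : Subgroup G) {A : Type*} [Group A]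
  (act : G0ᵐᵒᵖ →* MulAut A)

/-- The anti-homomorphism `x ↦ op x⁻¹`, as a homomorphism `H →* Hᵐᵒᵖ`. -/
def invOpHom (H : Type*) [Group H] : H →* Hᵐᵒᵖ where
  toFun x := op x⁻¹
  map_one' := by simp
  map_mul' x y := by simp only [mul_inv_rev, op_mul]

/-- The left action of `G0` on `A` corresponding to the given right action `act`;
the semidirect product `A ⋊ G0` is `A ⋊[baseAct G0 act] G0`. -/
def baseAct : G0 →* MulAut A := act.comp (invOpHom G0)

/-- The Shapiro map `Ind_{G0}^G(A) ⋊ G0 → A ⋊ G0`, `fσ ↦ f(1)σ`, defined on the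
subgroup `Ind_{G0}^G(A) ⋊ G0 = rightHom⁻¹(G0)` of the twisted wreath product. -/
def shapiro :
    (Subgroup.comap (SemidirectProduct.rightHom :
        (TwInd G0 act ⋊[twAct G0 act] G) →* G) G0) →* A ⋊[baseAct G0 act] G0 :=
  MonoidHom.mk'
    (fun x => ⟨((x : TwInd G0 act ⋊[twAct G0 act] G).left : G → A) 1,
      ⟨SemidirectProduct.rightHom (x : TwInd G0 act ⋊[twAct G0 act] G), x.2⟩⟩)
    (by
      intro x y
      set xe := (x : TwInd G0 act ⋊[twAct G0 act] G)
      set ye := (y : TwInd G0 act ⋊[twAct G0 act] G)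
      have hcoe : ((x * y : _) : TwInd G0 act ⋊[twAct G0 act] G) = xe * ye := rfl
      apply SemidirectProduct.ext
      · show ((xe * ye).left : G → A) 1 = _
        rw [SemidirectProduct.mul_left]
        have h1 : ((xe.left * (twAct G0 act) xe.right ye.left : TwInd G0 act) : G → A) 1 =
            (xe.left : G → A) 1 * (ye.left : G → A) (xe.right⁻¹ * 1) := rfl
        rw [h1, mul_one]
        have h2 : (ye.left : G → A) (xe.right⁻¹) =
            act (op (⟨xe.right, x.2⟩ : G0)⁻¹) ((ye.left : G → A) 1) := by
          have := ye.left.2 1 (⟨xe.right, x.2⟩ : G0)⁻¹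
          simpa using this
        rw [h2]
        rfl
      · rfl)

/-!
Write `i x = (a x, x)`. Then `b x = (a x⁻¹)⁻¹` is a crossed homomorphism for the right action:
`b (x * y) = b(x)^y * b(y)`. Choosing a left transversal of `G0` through `1` and writing
`τ = s * ρ(τ)`, the function `F = b ∘ ρ : G → A` has `F 1 = 1` and `F (τ * x) = F(τ)^x * b(x)`.
It does not lie in `Ind`, but its coboundary `σ ↦ F * (σ • F)⁻¹` does, since the defect `b`
cancels; being a coboundary it is a cocycle, so `σ ↦ (F * (σ • F)⁻¹, σ)` splits `α`. For
`σ ∈ G0` its value at `1` is `F(σ⁻¹)⁻¹ = b(σ⁻¹)⁻¹ = a σ`.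
-/

open SemidirectProduct

section CoboundarySplitting

variable {G0 act}

theorem baseAct_apply (x : G0) : baseAct G0 act x = act (op x⁻¹) := rfl

def splittingCocycle (i : G0 →* A ⋊[baseAct G0 act] G0) (x : G0) : A := ((i x⁻¹).left)⁻¹

theorem splittingCocycle_mul {i : G0 →* A ⋊[baseAct G0 act] G0}
    (hi : rightHom.comp i = MonoidHom.id G0) (x y : G0) :
    splittingCocycle i (x * y) = act (op y) (splittingCocycle i x) * splittingCocycle i y := by
  have hright : (i y⁻¹).right = y⁻¹ := DFunLike.congr_fun hi y⁻¹
  rw [splittingCocycle, mul_inv_rev, map_mul, mul_left, hright, mul_inv_rev, ← map_inv,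
    baseAct_apply, inv_inv]
  rfl

theorem exists_extension_of_crossedHom {b : G0 → A}
    (hb : ∀ x y : G0, b (x * y) = act (op y) (b x) * b y) :
    ∃ F : G → A, F 1 = 1 ∧ ∀ (τ : G) (x : G0), F (τ * x) = act (op x) (F τ) * b x := by
  obtain ⟨S, hS, hS1⟩ := Subgroup.exists_isComplement_left G0 1
  have hb1 : b 1 = 1 := by simpa using hb 1 1
  refine ⟨fun τ => b (hS.equiv τ).2, ?_, fun τ x => ?_⟩
  · simp only [hS.equiv_one hS1 G0.one_mem]
    exact hb1
  · simp only [hS.equiv_mul_right τ x]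
    exact hb _ _

variable {b : G0 → A} {F : G → A}

theorem coboundary_mem_twInd (hF : ∀ (τ : G) (x : G0), F (τ * x) = act (op x) (F τ) * b x)
    (σ : G) : (fun τ => F τ * (F (σ⁻¹ * τ))⁻¹) ∈ TwInd G0 act := by
  intro τ x
  simp only [← mul_assoc, hF, map_mul, map_inv, mul_inv_rev, mul_inv_cancel_right]

def coboundarySplitting (hF : ∀ (τ : G) (x : G0), F (τ * x) = act (op x) (F τ) * b x) :
    G →* TwInd G0 act ⋊[twAct G0 act] G :=
  MonoidHom.mk' (fun σ => ⟨⟨_, coboundary_mem_twInd hF σ⟩, σ⟩) fun σ σ' => by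
    refine SemidirectProduct.ext (Subtype.ext (funext fun τ => ?_)) rfl
    change F τ * (F ((σ * σ')⁻¹ * τ))⁻¹ =
      F τ * (F (σ⁻¹ * τ))⁻¹ * (F (σ⁻¹ * τ) * (F (σ'⁻¹ * (σ⁻¹ * τ)))⁻¹)
    simp only [mul_inv_rev, mul_assoc, inv_mul_cancel_left]

theorem shapiro_coboundarySplitting
    (hF : ∀ (τ : G) (x : G0), F (τ * x) = act (op x) (F τ) * b x) (hF1 : F 1 = 1) (σ : G0)
    (h : coboundarySplitting hF σ ∈ Subgroup.comap rightHom G0) :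
    shapiro G0 act ⟨coboundarySplitting hF σ, h⟩ = ⟨(b σ⁻¹)⁻¹, σ⟩ := by
  refine SemidirectProduct.ext ?_ rfl
  change F 1 * (F ((σ : G)⁻¹ * 1))⁻¹ = (b σ⁻¹)⁻¹
  rw [mul_one, ← one_mul ((σ : G)⁻¹), ← Subgroup.coe_inv, hF, hF1, map_one, one_mul, one_mul]

end CoboundarySplitting

theorem exists_splitting_compatible_with_shapiro
    (i : G0 →* A ⋊[baseAct G0 act] G0)
    (hi : SemidirectProduct.rightHom.comp i = MonoidHom.id G0) :
    ∃ j : G →* TwInd G0 act ⋊[twAct G0 act] G,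
      SemidirectProduct.rightHom.comp j = MonoidHom.id G ∧
      ∀ σ : G0, ∃ h : j ↑σ ∈ Subgroup.comap (SemidirectProduct.rightHom :
          (TwInd G0 act ⋊[twAct G0 act] G) →* G) G0,
        shapiro G0 act ⟨j ↑σ, h⟩ = i σ := by
  obtain ⟨F, hF1, hF⟩ := exists_extension_of_crossedHom (splittingCocycle_mul hi)
  refine ⟨coboundarySplitting hF, rfl,
    fun σ => ⟨σ.2, (shapiro_coboundarySplitting hF hF1 σ _).trans ?_⟩⟩
  rw [splittingCocycle, inv_inv, inv_inv]
  exact SemidirectProduct.ext rfl (DFunLike.congr_fun hi σ).symm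
end

section
/- Let G be a group, N a normal subgroup of G, N0 a subgroup of G with N ⊆ N0, and let φ : G → H be a surjective homomorphism onto a group H. Assume that H and G/N have no common nontrivial quotient, i.e. every group that is simultaneously a quotient (surjective homomorphic image) of H and a quotient of G/N is trivial. Then there is a surjective homomorphism from N0 onto H. In particular, if H has a subgroup of index n, then N0 has a subgroup of index n. -/
universe u

/-! The image `φ(N)` is normal in `H`, and `H ⧸ φ(N)` is a quotient both of `H` and of `G ⧸ N`
(via the map induced by `φ`). So it is trivial, i.e. `φ(N) = H`; a fortiori `φ(N₀) = H`, and
`φ` restricted to `N₀` is the required surjection. -/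

theorem Subgroup.map_eq_top_of_no_common_quotient {G H : Type u} [Group G] [Group H]
    (N : Subgroup G) [N.Normal] {φ : G →* H} (hφ : Function.Surjective φ)
    (hcommon : ∀ (Q : Type u) [Group Q] (f : H →* Q) (g : G ⧸ N →* Q),
      Function.Surjective f → Function.Surjective g → Subsingleton Q) :
    N.map φ = ⊤ := by
  have : (N.map φ).Normal := Subgroup.Normal.map ‹_› φ hφ
  have hg : Function.Surjective (QuotientGroup.map N (N.map φ) φ (N.le_comap_map φ)) :=
    QuotientGroup.map_surjective_of_surjective _ _ φ (QuotientGroup.mk_surjective.comp hφ) _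
  exact QuotientGroup.subsingleton_iff.mp
    (hcommon _ (QuotientGroup.mk' _) _ (QuotientGroup.mk'_surjective _) hg)

theorem MonoidHom.domRestrict_surjective_of_map_eq_top {G H : Type*} [Group G] [Group H]
    {φ : G →* H} {N N₀ : Subgroup G} (hNN₀ : N ≤ N₀) (htop : N.map φ = ⊤) :
    Function.Surjective (φ.domRestrict N₀) :=
  MonoidHom.range_eq_top.mp <| by
    rw [MonoidHom.domRestrict_range]
    exact top_unique (htop ▸ Subgroup.map_mono hNN₀)

/-- if `N ≤ N₀ ≤ G` with `N` normal in `G`, `φ : G → H` is surjective, and `H`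
and `G/N` have no common nontrivial quotient, then `H` is a quotient of `N₀`; in particular,
if `H` has a subgroup of index `n`, so does `N₀`. -/
theorem surjective_of_no_common_quotient
    {G H : Type u} [Group G] [Group H]
    (N N₀ : Subgroup G) [N.Normal] (hNN₀ : N ≤ N₀)
    (φ : G →* H) (hφ : Function.Surjective φ)
    (hcommon : ∀ (Q : Type u) [Group Q] (f : H →* Q) (g : G ⧸ N →* Q),
      Function.Surjective f → Function.Surjective g → Subsingleton Q) :
    (∃ ψ : N₀ →* H, Function.Surjective ψ) ∧
    (∀ n : ℕ, (∃ K : Subgroup H, K.index = n) → ∃ K : Subgroup N₀, K.index = n) := by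
  have hψ : Function.Surjective (φ.domRestrict N₀) :=
    MonoidHom.domRestrict_surjective_of_map_eq_top hNN₀
      (N.map_eq_top_of_no_common_quotient hφ hcommon)
  refine ⟨⟨_, hψ⟩, ?_⟩
  rintro n ⟨K, rfl⟩
  exact ⟨K.comap _, K.index_comap_of_surjective hψ⟩
end

section
/- Let F be a field and let a, b, c ∈ F[X] be polynomials such that a and b are relatively prime and c ≠ 0. Then there exists a finite subset S ⊆ F such that for every α ∈ F ∖ S the polynomials a + α·b and c are relatively prime. Moreover, if the formal derivative b' is nonzero, then S can be chosen so that in addition a + α·b is separable (has no repeated roots) for every α ∈ F ∖ S. -/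
/-!
With `W = a b' - a' b` the Wronskian, `p_α = a + α b` satisfies `W(p_α, b) = W`, and
`W = p_α b' - p_α' b` lies in the ideal `(p_α, p_α')`; so `p_α` is separable as soon as it is
coprime to `W`, which is nonzero when `b' ≠ 0`. It remains to see that for any `q ≠ 0` only finitely
many `p_α` share a root with `q` in an algebraic closure: at a common root `x` we have `b(x) ≠ 0`
by coprimality, so `α = -a(x)/b(x)` is determined by one of the finitely many roots of `q`.
-/

open Polynomial

namespace Polynomial

theorem wronskian_add_C_mul_self_left {R : Type*} [CommRing R] (a b : R[X]) (r : R) :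
    wronskian (a + C r * b) b = wronskian a b := by
  simp only [wronskian, derivative_add, derivative_C_mul]
  ring

theorem separable_of_isCoprime_wronskian {R : Type*} [CommRing R] {p q : R[X]}
    (h : IsCoprime p (wronskian p q)) : p.Separable := by
  obtain ⟨u, v, huv⟩ := h
  exact ⟨u + v * derivative q, -(v * q), by rw [← huv, wronskian]; ring⟩

theorem algebraMap_eq_neg_div_of_aeval_add_C_mul_eq_zero {R K : Type*} [CommRing R] [Field K]
    [Algebra R K] {a b : R[X]} (hab : IsCoprime a b) {r : R} {x : K}
    (hx : aeval x (a + C r * b) = 0) : algebraMap R K r = -aeval x a / aeval x b := by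
  rw [map_add, map_mul, aeval_C] at hx
  have hbx : aeval x b ≠ 0 := fun hbx ↦
    (aeval_ne_zero_of_isCoprime hab x).elim (· (by simpa [hbx] using hx)) (· hbx)
  rw [eq_div_iff hbx]
  linear_combination hx

theorem finite_setOf_not_isCoprime_add_C_mul {F : Type*} [Field F] {a b q : F[X]}
    (hab : IsCoprime a b) (hq : q ≠ 0) : {α : F | ¬IsCoprime (a + C α * b) q}.Finite := by
  let K := AlgebraicClosure F
  refine (((rootSet_finite q K).image fun x ↦ -aeval x a / aeval x b).preimage
    (algebraMap F K).injective.injOn).subset fun α hα ↦ ?_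
  obtain ⟨x, hpx, hqx⟩ : ∃ x : K, aeval x (a + C α * b) = 0 ∧ aeval x q = 0 := by
    simpa [isCoprime_iff_aeval_ne_zero_of_isAlgClosed F K] using hα
  exact ⟨x, (mem_rootSet_of_ne hq).mpr hqx,
    (algebraMap_eq_neg_div_of_aeval_add_C_mul_eq_zero hab hpx).symm⟩

end Polynomial

/-- if `a, b ∈ F[X]` are relatively prime and `c ≠ 0`, then for all `α ∈ F`
outside a finite set `S`, the polynomials `a + α·b` and `c` are relatively prime; moreover,
if `b' ≠ 0`, `S` can be chosen such that in addition `a + α·b` is separable. -/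
theorem exists_finset_isCoprime_add_smul
    {F : Type*} [Field F] (a b c : Polynomial F)
    (hab : IsCoprime a b) (hc : c ≠ 0) :
    (∃ S : Finset F, ∀ α : F, α ∉ S → IsCoprime (a + Polynomial.C α * b) c) ∧
    (Polynomial.derivative b ≠ 0 →
      ∃ S : Finset F, ∀ α : F, α ∉ S →
        IsCoprime (a + Polynomial.C α * b) c ∧ (a + Polynomial.C α * b).Separable) := by
  classical
  have hcop {q : F[X]} (hq : q ≠ 0) :
      ∀ α ∉ (finite_setOf_not_isCoprime_add_C_mul hab hq).toFinset,
        IsCoprime (a + C α * b) q := by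
    simp
  refine ⟨⟨_, hcop hc⟩, fun hb' ↦ ?_⟩
  have hW : wronskian a b ≠ 0 := fun h ↦ hb' (hab.wronskian_eq_zero_iff.mp h).2
  refine ⟨(finite_setOf_not_isCoprime_add_C_mul hab hc).toFinset ∪
    (finite_setOf_not_isCoprime_add_C_mul hab hW).toFinset, fun α hα ↦ ?_⟩
  rw [Finset.mem_union, not_or] at hα
  refine ⟨hcop hc α hα.1, separable_of_isCoprime_wronskian (q := b) ?_⟩
  rw [wronskian_add_C_mul_self_left]
  exact hcop hW α hα.2
end

section
/- Let F be an infinite field, let a, b, p₁, p₂ ∈ F[X] be nonzero pairwise relatively prime polynomials, and let α₁, α₂ ∈ F be distinct nonzero elements. Then for every integer n > deg p₁ + deg p₂ there exist a polynomial c ∈ F[X] of degree n and separable polynomials h₁, h₂ ∈ F[X] such that a = pᵢ·hᵢ + b·c·αᵢ and gcd(hᵢ, a·pᵢ) = 1 (a unit) for i = 1, 2. -/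
/-!
Since `b` is invertible modulo `p₁` and `p₂`, the Chinese remainder theorem gives `c₀` with
`a - αᵢ b c₀ = pᵢ gᵢ`; then every `c = c₀ + l p₁ p₂ s` (`l ∈ F`) satisfies `a - αᵢ b c = pᵢ hᵢ`
with `hᵢ = gᵢ - l αᵢ b pⱼ s`, where `s` of degree `n - deg p₁ p₂` is chosen prime to `g₁ g₂` and
with `(b pⱼ s)' ≠ 0`. For coprime `g, f` with `f' ≠ 0`, the pencil `g - l f` is separable and
prime to a given `A ≠ 0` for all but finitely many `l`: at a bad `l`, `l = g(x) / f(x)` for a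
root `x` of `A` or of the Wronskian `g f' - g' f ≠ 0`. As `F` is infinite, some `l` is good for
both `i`.
-/

open Polynomial Filter

namespace Polynomial

section Domain

variable {R : Type*} [CommRing R] [IsDomain R]

theorem eventually_sub_C_mul_ne_zero (r : R[X]) {u : R[X]} (hu : u ≠ 0) :
    ∀ᶠ t in cofinite, r - C t * u ≠ 0 := by
  refine eventually_cofinite.mpr (Set.Subsingleton.finite fun t ht t' ht' => ?_)
  simp only [Set.mem_ofPred_eq, not_not] at ht ht'
  have : C (t - t') * u = 0 := by rw [C_sub]; linear_combination ht' - ht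
  exact sub_eq_zero.mp (C_eq_zero.mp ((mul_eq_zero.mp this).resolve_right hu))

theorem eventually_derivative_mul_X_sub_C_ne_zero {E : R[X]} (hE : E ≠ 0) :
    ∀ᶠ t in cofinite, derivative (E * (X - C t)) ≠ 0 := by
  have key (t : R) :
      derivative (E * (X - C t)) = (derivative E * X + E) - C t * derivative E := by
    simp only [derivative_mul, derivative_sub, derivative_X, derivative_C]; ring
  simp only [key]
  by_cases hE' : derivative E = 0
  · exact .of_forall fun t => by simpa [hE'] using hE
  · exact eventually_sub_C_mul_ne_zero _ hE'

theorem eventually_not_isRoot {p : R[X]} (hp : p ≠ 0) : ∀ᶠ t in cofinite, ¬ p.IsRoot t :=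
  eventually_cofinite.mpr (by simpa using finite_setOfPred_isRoot hp)

end Domain

variable {F : Type*} [Field F]

theorem isCoprime_X_sub_C_of_not_isRoot {t : F} {p : F[X]} (h : ¬ p.IsRoot t) :
    IsCoprime (X - C t) p :=
  (irreducible_X_sub_C t).coprime_iff_not_dvd.mpr (mt dvd_iff_isRoot.mp h)

theorem eventually_forall_aeval_sub_C_mul (K : Type*) [Field K] [IsAlgClosed K] [Algebra F K]
    {g f : F[X]} (hgf : IsCoprime g f) {Q : F[X]} (hQ : Q ≠ 0) :
    ∀ᶠ l in cofinite, ∀ x : K, aeval x (g - C l * f) = 0 → aeval x Q ≠ 0 := by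
  refine eventually_cofinite.mpr (((Q.rootSet_finite K).image
    fun x => aeval x g / aeval x f).preimage (algebraMap F _).injective.injOn |>.subset ?_)
  intro l hl
  push Not at hl
  obtain ⟨x, hx, hQx⟩ := hl
  have hgx : aeval x g = algebraMap F _ l * aeval x f := by
    simpa [sub_eq_zero] using hx
  have hfx : aeval x f ≠ 0 := fun hfx =>
    ((isCoprime_iff_aeval_ne_zero_of_isAlgClosed F _ g f).mp hgf x).elim
      (· (by rw [hgx, hfx, mul_zero])) (· hfx)
  exact ⟨x, (mem_rootSet_of_ne hQ).mpr hQx, by simp [hgx, hfx]⟩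

theorem eventually_separable_sub_C_mul_and_isCoprime {g f A : F[X]} (hgf : IsCoprime g f)
    (hf : derivative f ≠ 0) (hA : A ≠ 0) :
    ∀ᶠ l in cofinite, (g - C l * f).Separable ∧ IsCoprime (g - C l * f) A := by
  have hW : wronskian g f ≠ 0 := fun h => hf (hgf.wronskian_eq_zero_iff.mp h).2
  filter_upwards [eventually_forall_aeval_sub_C_mul (AlgebraicClosure F) hgf hW,
    eventually_forall_aeval_sub_C_mul (AlgebraicClosure F) hgf hA] with l hlW hlA
  -- the Wronskian is unchanged when `g` is replaced by `g - l f`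
  have hWl : wronskian g f = wronskian (g - C l * f) f := by
    simp only [wronskian, derivative_sub, derivative_C_mul]; ring
  simp only [Separable, isCoprime_iff_aeval_ne_zero_of_isAlgClosed F (AlgebraicClosure F)]
  refine ⟨fun x => ?_, fun x => or_iff_not_imp_left.mpr fun hx => hlA x (not_not.mp hx)⟩
  refine or_iff_not_imp_left.mpr fun hx => fun hx' => hlW x (not_not.mp hx) ?_
  rw [hWl, wronskian, map_sub, map_mul, map_mul, not_not.mp hx, hx', zero_mul, zero_mul, sub_zero]

theorem exists_dvd_sub_mul_of_isCoprime {R : Type*} [CommRing R] (a : R) {u₁ u₂ p₁ p₂ : R}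
    (h₁ : IsCoprime u₁ p₁) (h₂ : IsCoprime u₂ p₂) (hp : IsCoprime p₁ p₂) :
    ∃ c, p₁ ∣ a - u₁ * c ∧ p₂ ∣ a - u₂ * c := by
  obtain ⟨w₁, z₁, e₁⟩ := h₁
  obtain ⟨w₂, z₂, e₂⟩ := h₂
  obtain ⟨x, y, e⟩ := hp
  -- `wᵢ` inverts `uᵢ` modulo `pᵢ`, and `y p₂`, `x p₁` are the idempotents of the CRT splitting.
  refine ⟨a * (w₁ * y * p₂ + w₂ * x * p₁), ⟨a * (z₁ + x - z₁ * x * p₁ - u₁ * w₂ * x), ?_⟩,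
    ⟨a * (z₂ + y - z₂ * y * p₂ - u₂ * w₁ * y), ?_⟩⟩
  · linear_combination (-a * y * p₂) * e₁ - a * (1 - z₁ * p₁) * e
  · linear_combination (-a * x * p₁) * e₂ - a * (1 - z₂ * p₂) * e

theorem exists_degree_le_sub_mul_eq_mul [Infinite F] (a : F[X]) {u₁ u₂ p₁ p₂ : F[X]}
    (h₁ : IsCoprime u₁ p₁) (h₂ : IsCoprime u₂ p₂) (hp : IsCoprime p₁ p₂)
    (hu₁ : u₁ ≠ 0) (hu₂ : u₂ ≠ 0) (hp₁ : p₁ ≠ 0) (hp₂ : p₂ ≠ 0) :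
    ∃ c g₁ g₂, c.degree ≤ (p₁ * p₂).degree ∧ a - u₁ * c = p₁ * g₁ ∧ a - u₂ * c = p₂ * g₂ ∧
      g₁ ≠ 0 ∧ g₂ ≠ 0 := by
  obtain ⟨c, ⟨k₁, hk₁⟩, ⟨k₂, hk₂⟩⟩ := exists_dvd_sub_mul_of_isCoprime a h₁ h₂ hp
  have hc := EuclideanDomain.mod_add_div c (p₁ * p₂)
  obtain ⟨t, ht₁, ht₂⟩ :=
    ((eventually_sub_C_mul_ne_zero (k₁ + u₁ * p₂ * (c / (p₁ * p₂))) (mul_ne_zero hu₁ hp₂)).and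
      (eventually_sub_C_mul_ne_zero (k₂ + u₂ * p₁ * (c / (p₁ * p₂)))
        (mul_ne_zero hu₂ hp₁))).exists
  refine ⟨c % (p₁ * p₂) + C t * (p₁ * p₂), _, _, ?_, ?_, ?_, ht₁, ht₂⟩
  · exact (degree_add_le _ _).trans (max_le (degree_mod_lt _ (mul_ne_zero hp₁ hp₂)).le
      (smul_eq_C_mul t ▸ degree_smul_le t _))
  · linear_combination hk₁ - u₁ * hc
  · linear_combination hk₂ - u₂ * hc

-- `α₂ (a - α₁ b c) = (α₂ - α₁) a + α₁ (a - α₂ b c)`, and the last term vanishes modulo `q`.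
theorem isCoprime_mul_of_sub_C_mul_eq {a b c p q g : F[X]} {α₁ α₂ : F} (hα : α₁ ≠ α₂)
    (hab : IsCoprime a b) (haq : IsCoprime a q)
    (h₁ : a - C α₁ * b * c = p * g) (h₂ : q ∣ a - C α₂ * b * c) : IsCoprime g (b * q) := by
  obtain ⟨k, hk⟩ := h₂
  suffices IsCoprime (a - C α₁ * b * c) (b * q) from (h₁ ▸ this).of_mul_left_right
  refine .mul_right ?_ ?_
  · have e : a - C α₁ * b * c = a + b * -(C α₁ * c) := by ring
    exact e ▸ hab.add_mul_left_left _
  · have hα' : IsUnit (C (α₂ - α₁)) := isUnit_C.mpr (sub_ne_zero.mpr hα.symm).isUnit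
    have h := ((isCoprime_mul_unit_left_left hα' a q).mpr haq).add_mul_left_left (C α₁ * k)
    refine IsCoprime.of_mul_left_right (x := C α₂) ?_
    have e : C α₂ * (a - C α₁ * b * c) = C (α₂ - α₁) * a + q * (C α₁ * k) := by
      rw [C_sub]; linear_combination (C α₁) * hk
    exact e ▸ h

theorem natDegree_add_C_mul_mul {c P s : F[X]} {l : F} (hc : c.degree ≤ P.degree) (hP : P ≠ 0)
    (hs : 0 < s.natDegree) (hl : l ≠ 0) :
    (c + C l * (P * s)).natDegree = P.natDegree + s.natDegree := by
  have hs₀ : s ≠ 0 := ne_zero_of_natDegree_gt hs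
  have hdeg : (C l * (P * s)).natDegree = P.natDegree + s.natDegree := by
    rw [natDegree_C_mul hl, natDegree_mul hP hs₀]
  rw [natDegree_add_eq_right_of_degree_lt, hdeg]
  exact hc.trans_lt (degree_lt_degree (by omega))

-- `(X - γ) ^ m` supplies the degree and only the simple root `β` is varied: in characteristic `p`
-- the derivative of, e.g., `(X - β) ^ p` vanishes for every `β`.
theorem exists_natDegree_eq_isCoprime_derivative_mul_ne_zero [Infinite F] (m : ℕ)
    {N E₁ E₂ : F[X]} (hN : N ≠ 0) (hE₁ : E₁ ≠ 0) (hE₂ : E₂ ≠ 0) :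
    ∃ s : F[X], s.natDegree = m + 1 ∧ IsCoprime s N ∧
      derivative (E₁ * s) ≠ 0 ∧ derivative (E₂ * s) ≠ 0 := by
  obtain ⟨γ, hγ⟩ := (eventually_not_isRoot hN).exists
  have hγm : (X - C γ) ^ m ≠ 0 := pow_ne_zero _ (X_sub_C_ne_zero γ)
  obtain ⟨β, hβ, hβ₁, hβ₂⟩ := ((eventually_not_isRoot hN).and
    ((eventually_derivative_mul_X_sub_C_ne_zero (mul_ne_zero hE₁ hγm)).and
      (eventually_derivative_mul_X_sub_C_ne_zero (mul_ne_zero hE₂ hγm)))).exists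
  refine ⟨(X - C γ) ^ m * (X - C β), ?_,
    (isCoprime_X_sub_C_of_not_isRoot hγ).pow_left.mul_left (isCoprime_X_sub_C_of_not_isRoot hβ),
    by rw [← mul_assoc]; exact hβ₁, by rw [← mul_assoc]; exact hβ₂⟩
  rw [natDegree_mul hγm (X_sub_C_ne_zero β), natDegree_pow, natDegree_X_sub_C,
    natDegree_X_sub_C, mul_one]

end Polynomial

/-- for nonzero pairwise relatively prime `a, b, p₁, p₂ ∈ F[X]` over an
infinite field `F` and distinct nonzero `α₁, α₂ ∈ F`, for every `n > deg p₁ + deg p₂`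
there are `c` of degree `n` and separable `h₁, h₂` with `a = pᵢ hᵢ + b c αᵢ` and
`gcd(hᵢ, a pᵢ) = 1` for `i = 1, 2`. -/
theorem exists_degree_eq_separable_decomposition
    {F : Type*} [Field F] [Infinite F]
    (a b p₁ p₂ : Polynomial F)
    (ha : a ≠ 0) (hb : b ≠ 0) (hp₁ : p₁ ≠ 0) (hp₂ : p₂ ≠ 0)
    (hab : IsCoprime a b) (hap₁ : IsCoprime a p₁) (hap₂ : IsCoprime a p₂)
    (hbp₁ : IsCoprime b p₁) (hbp₂ : IsCoprime b p₂) (hp₁p₂ : IsCoprime p₁ p₂)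
    (α₁ α₂ : F) (hα : α₁ ≠ α₂) (hα₁ : α₁ ≠ 0) (hα₂ : α₂ ≠ 0)
    (n : ℕ) (hn : p₁.natDegree + p₂.natDegree < n) :
    ∃ c h₁ h₂ : Polynomial F,
      c.natDegree = n ∧ h₁.Separable ∧ h₂.Separable ∧
      a = p₁ * h₁ + b * c * Polynomial.C α₁ ∧
      a = p₂ * h₂ + b * c * Polynomial.C α₂ ∧
      IsCoprime h₁ (a * p₁) ∧ IsCoprime h₂ (a * p₂) := by
  have hu {α : F} (hα : α ≠ 0) : IsUnit (C α) := isUnit_C.mpr hα.isUnit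
  obtain ⟨c₀, g₁, g₂, hc₀, hg₁, hg₂, hg₁₀, hg₂₀⟩ := exists_degree_le_sub_mul_eq_mul a
    ((isCoprime_mul_unit_left_left (hu hα₁) b p₁).mpr hbp₁)
    ((isCoprime_mul_unit_left_left (hu hα₂) b p₂).mpr hbp₂) hp₁p₂
    (mul_ne_zero (C_ne_zero.mpr hα₁) hb) (mul_ne_zero (C_ne_zero.mpr hα₂) hb) hp₁ hp₂
  have hg₁bp₂ := isCoprime_mul_of_sub_C_mul_eq hα hab hap₂ hg₁ ⟨g₂, hg₂⟩
  have hg₂bp₁ := isCoprime_mul_of_sub_C_mul_eq hα.symm hab hap₁ hg₂ ⟨g₁, hg₁⟩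
  obtain ⟨m, rfl⟩ := Nat.exists_eq_add_of_lt hn
  obtain ⟨s, hsdeg, hsg, hd₁, hd₂⟩ := exists_natDegree_eq_isCoprime_derivative_mul_ne_zero m
    (mul_ne_zero hg₁₀ hg₂₀) (mul_ne_zero hb hp₂) (mul_ne_zero hb hp₁)
  have hl₁ := eventually_separable_sub_C_mul_and_isCoprime
    (hg₁bp₂.mul_right hsg.symm.of_mul_left_left) hd₁ (mul_ne_zero ha hp₁)
  have hl₂ := eventually_separable_sub_C_mul_and_isCoprime
    (hg₂bp₁.mul_right hsg.symm.of_mul_left_right) hd₂ (mul_ne_zero ha hp₂)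
  obtain ⟨l, hl, ⟨hsep₁, hcop₁⟩, hsep₂, hcop₂⟩ := ((eventually_cofinite_ne 0).and
    (((mul_left_injective₀ hα₁).tendsto_cofinite.eventually hl₁).and
      ((mul_left_injective₀ hα₂).tendsto_cofinite.eventually hl₂))).exists
  refine ⟨c₀ + C l * (p₁ * p₂ * s), _, _, ?_, hsep₁, hsep₂, ?_, ?_, hcop₁, hcop₂⟩
  · rw [natDegree_add_C_mul_mul hc₀ (mul_ne_zero hp₁ hp₂) (by omega) hl, natDegree_mul hp₁ hp₂,
      hsdeg]
    ring
  · rw [C_mul]; linear_combination hg₁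
  · rw [C_mul]; linear_combination hg₂
end

section
/- Let n be a positive integer, let A be a transitive subgroup of the symmetric group S_n on n points, and let e be an integer with n/2 < e < n and gcd(e, n) = 1. If A contains an e-cycle (a cycle whose support has exactly e points), then A is primitive. If moreover A contains a transposition, then A = S_n. -/
/-! A nontrivial proper block `B` has `|B| ∣ n`, hence `|B| ≤ n/2 < e`, so no translate of `B` can
contain the support of the `e`-cycle `σ`. A translate that met both the support and a fixed point of
`σ` would be stabilized by `σ` and hence contain the whole support; so the support is a union of
translates of `B`, and `|B| ∣ gcd(e, n) = 1`. Once `A` is primitive, Jordan's theorem turns the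
transposition into `A = S_n`. -/

open MulAction Pointwise
open scoped Finset

namespace MulAction.IsBlock

variable {G X : Type*} [Group G] [MulAction G X] {B : Set X}

theorem ncard_dvd_ncard_of_forall_smul_subset_or_disjoint [Finite X] [IsPretransitive G X]
    (hB : IsBlock G B) (hB_ne : B.Nonempty) {S : Set X}
    (hS : ∀ g : G, g • B ⊆ S ∨ Disjoint (g • B) S) :
    B.ncard ∣ S.ncard := by
  let T : Set (Set X) := {C | C ∈ orbit G B ∧ C ⊆ S}
  have hS_eq : S = ⋃ C ∈ T, C := by
    ext x
    refine ⟨fun hx ↦ ?_, fun hx ↦ ?_⟩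
    · obtain ⟨a, ha⟩ := hB_ne
      obtain ⟨g, rfl⟩ := exists_smul_eq G a x
      have hgB : g • B ⊆ S := (hS g).resolve_right
        (Set.not_disjoint_iff.mpr ⟨g • a, Set.smul_mem_smul_set ha, hx⟩)
      exact Set.mem_biUnion (x := g • B) ⟨⟨g, rfl⟩, hgB⟩ (Set.smul_mem_smul_set ha)
    · obtain ⟨C, ⟨-, hCS⟩, hxC⟩ := Set.mem_iUnion₂.mp hx
      exact hCS hxC
  have hT_disj : T.PairwiseDisjoint fun C ↦ C :=
    (isBlock_iff_pairwiseDisjoint_range_smul.mp hB).subset fun _ hC ↦ hC.1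
  rw [hS_eq, (Set.toFinite T).ncard_biUnion (fun _ _ ↦ Set.toFinite _) hT_disj]
  refine finsum_mem_induction (B.ncard ∣ ·) (dvd_zero _) (fun _ _ ↦ dvd_add) ?_
  rintro _ ⟨⟨g, rfl⟩, -⟩
  rw [Set.ncard_smul_set]

end MulAction.IsBlock

namespace Equiv.Perm

variable {α : Type*} [Fintype α] [DecidableEq α] {G : Subgroup (Perm α)} {σ : Perm α}

theorem IsCycle.support_subset_of_isBlock (hσ : σ.IsCycle) (hσG : σ ∈ G) {B : Set α}
    (hB : IsBlock G B) {a b : α} (haB : a ∈ B) (ha : σ a = a) (hbB : b ∈ B) (hb : σ b ≠ b) :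
    (σ.support : Set α) ⊆ B := by
  let s : G := ⟨σ, hσG⟩
  have hs : s ∈ stabilizer G B :=
    hB.smul_eq_of_mem haB (by rwa [Subgroup.mk_smul, Perm.smul_def, ha])
  intro x hx
  obtain ⟨k, rfl⟩ := hσ.exists_zpow_eq hb (mem_support.mp hx)
  rw [← (stabilizer G B).zpow_mem hs k]
  exact Set.smul_mem_smul_set hbB

theorem isPreprimitive_of_isCycle_mem [IsPretransitive G α] (hσG : σ ∈ G)
    (hσ : σ.IsCycle) (hcard : Nat.card α < 2 * #σ.support)
    (hcop : Nat.Coprime #σ.support (Nat.card α)) :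
    IsPreprimitive G α where
  isTrivialBlock_of_isBlock {B} hB := by
    by_contra hB_nt
    obtain ⟨hB_nsub, hB_ne_univ⟩ := not_or.mp hB_nt
    have hB_ne : B.Nonempty := (Set.not_subsingleton_iff.mp hB_nsub).nonempty
    have hsplit : ∀ g : G, g • B ⊆ σ.support ∨ _root_.Disjoint (g • B) σ.support := by
      intro g
      by_contra! h
      obtain ⟨a, haB, ha⟩ := Set.not_subset.mp h.1
      obtain ⟨b, hbB, hb⟩ := Set.not_disjoint_iff.mp h.2
      have hsupp : (σ.support : Set α) ⊆ g • B :=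
        hσ.support_subset_of_isBlock hσG (hB.translate g) haB (notMem_support.mp ha) hbB
          (mem_support.mp hb)
      have hlt : Nat.card α < (g • B).ncard * 2 := by
        have := Set.ncard_le_ncard hsupp
        rw [Set.ncard_coe_finset] at this
        omega
      apply hB_ne_univ
      rw [← Set.smul_set_eq_univ (a := g)]
      exact (hB.translate g).eq_univ_of_card_lt hlt
    have hdvd_supp := hB.ncard_dvd_ncard_of_forall_smul_subset_or_disjoint hB_ne hsplit
    rw [Set.ncard_coe_finset] at hdvd_supp
    have hB_one := Nat.eq_one_of_dvd_coprimes hcop hdvd_supp (hB.ncard_dvd_card hB_ne)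
    exact hB_nsub (Set.ncard_le_one_iff_subsingleton.mp hB_one.le)

end Equiv.Perm

theorem primitive_of_cycle_and_eq_top_of_swap_general
    (n : ℕ) (A : Subgroup (Equiv.Perm (Fin n)))
    (htrans : MulAction.IsPretransitive A (Fin n))
    (e : ℕ) (he₁ : n < 2 * e) (hcop : Nat.Coprime e n)
    (σ : Equiv.Perm (Fin n)) (hσA : σ ∈ A) (hcyc : σ.IsCycle)
    (hsupp : σ.support.card = e) :
    (∀ B : Set (Fin n), MulAction.IsBlock A B → MulAction.IsTrivialBlock B) ∧
    ((∃ τ ∈ A, τ.IsSwap) → A = ⊤) := by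
  subst hsupp
  have hprim : IsPreprimitive A (Fin n) :=
    Equiv.Perm.isPreprimitive_of_isCycle_mem hσA hcyc (by simpa using he₁) (by simpa using hcop)
  refine ⟨fun B hB ↦ hprim.isTrivialBlock_of_isBlock hB, ?_⟩
  rintro ⟨τ, hτA, hτ⟩
  exact Equiv.Perm.subgroup_eq_top_of_isPreprimitive_of_isSwap_mem hprim τ hτ hτA

/-- a transitive subgroup `A ≤ S_n` containing an `e`-cycle, where
`n/2 < e < n` and `gcd(e,n) = 1`, is primitive (every block of its action is trivial);
if moreover `A` contains a transposition, then `A = S_n`. -/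
theorem primitive_of_cycle_and_eq_top_of_swap
    (n : ℕ) (A : Subgroup (Equiv.Perm (Fin n)))
    (htrans : MulAction.IsPretransitive A (Fin n))
    (e : ℕ) (he₁ : n < 2 * e) (he₂ : e < n) (hcop : Nat.Coprime e n)
    (σ : Equiv.Perm (Fin n)) (hσA : σ ∈ A) (hcyc : σ.IsCycle)
    (hsupp : σ.support.card = e) :
    (∀ B : Set (Fin n), MulAction.IsBlock A B → MulAction.IsTrivialBlock B) ∧
    ((∃ τ ∈ A, τ.IsSwap) → A = ⊤) :=
  primitive_of_cycle_and_eq_top_of_swap_general n A htrans e he₁ hcop σ hσA hcyc hsupp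
end
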